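/- (Theorem 1, second bound.) In the smoothing spline truncation setting with Hilbert-space expansions, ‖f̃₁ − f̂₁‖² ≤ ζ₃ ‖Σ̃ − Σ‖_F² + n κ² ‖c‖² D_K. -/

import Mathlib

open Matrix BigOperators

/-- Squared Frobenius norm of a real matrix. -/
noncomputable def frobSq {m n : ℕ} (M : Matrix (Fin m) (Fin n) ℝ) : ℝ :=
  ∑ i, ∑ j, (M i j) ^ 2

/-- Squared Euclidean norm of a real vector. -/
noncomputable def vnormSq {m : ℕ} (v : Fin m → ℝ) : ℝ := ∑ i, (v i) ^ 2

/-!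
Since `Tᵀ c = 0` and `R` is invertible, `c` lies in the column space of `Q₂`, so `z = Q₂ᵀ c`
solves the reduced system `(Q₂ᵀ Σ Q₂ + nλ) z = Q₂ᵀ y`; likewise for `c̃`. For positive definite `M`
and `t ≥ 0`, expanding in an eigenbasis of `M` gives `‖v‖² ≤ (∑ λₖ⁻²) ‖(M + t) v‖²`. Applied to `z`
this gives `‖z‖² ≤ B ‖Q₂ᵀ y‖²`, and applied to `z̃ - z`, which solves
`(Q₂ᵀ Σ̃ Q₂ + nλ)(z̃ - z) = Q₂ᵀ (Σ - Σ̃) c`, it gives `‖c̃ - c‖² ≤ B̃ ‖Σ̃ - Σ‖_F² B ‖Q₂ᵀ y‖²`.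
By orthonormality of `Φ`, `‖f̃₁ - f̂₁‖² = ∑_{k<K} (ãₖ - aₖ)² + ∑_{k≥K} aₖ²`, and Cauchy–Schwarz
with `|U i k| ≤ κ` bounds the `k`-th term by `n κ² δₖ²` times `‖c̃ - c‖²`, resp. `‖c‖²`.
The factor `‖Q₂‖_F⁶ = (n - p)³ ≥ 1` is slack.
-/

lemma vnormSq_eq_dotProduct {m : ℕ} (v : Fin m → ℝ) : vnormSq v = v ⬝ᵥ v := by
  simp [vnormSq, dotProduct, sq]

lemma vnormSq_nonneg {m : ℕ} (v : Fin m → ℝ) : 0 ≤ vnormSq v := by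
  unfold vnormSq; positivity

lemma frobSq_nonneg {m q : ℕ} (M : Matrix (Fin m) (Fin q) ℝ) : 0 ≤ frobSq M := by
  unfold frobSq; positivity

lemma frobSq_sub_comm {m q : ℕ} (M N : Matrix (Fin m) (Fin q) ℝ) :
    frobSq (M - N) = frobSq (N - M) := by
  rw [← neg_sub]
  simp only [frobSq, Matrix.neg_apply, neg_sq]

lemma frobSq_eq_trace {m q : ℕ} (M : Matrix (Fin m) (Fin q) ℝ) : frobSq M = (Mᵀ * M).trace := by
  rw [frobSq, Finset.sum_comm]
  simp [trace, mul_apply, sq]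

lemma frobSq_eq_of_transpose_mul_self {m q : ℕ} {Q : Matrix (Fin m) (Fin q) ℝ} (hQ : Qᵀ * Q = 1) :
    frobSq Q = q := by
  simp [frobSq_eq_trace, hQ]

lemma vnormSq_mulVec_le {m q : ℕ} (M : Matrix (Fin m) (Fin q) ℝ) (x : Fin q → ℝ) :
    vnormSq (M *ᵥ x) ≤ frobSq M * vnormSq x := by
  rw [vnormSq, frobSq, Finset.sum_mul]
  gcongr with i
  exact Finset.sum_mul_sq_le_sq_mul_sq Finset.univ (M i) x

lemma vnormSq_mulVec_of_transpose_mul_self {m q : ℕ} {Q : Matrix (Fin m) (Fin q) ℝ}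
    (hQ : Qᵀ * Q = 1) (x : Fin q → ℝ) : vnormSq (Q *ᵥ x) = vnormSq x := by
  rw [vnormSq_eq_dotProduct, vnormSq_eq_dotProduct, dotProduct_mulVec, ← mulVec_transpose,
    mulVec_mulVec, hQ, one_mulVec]

lemma vnormSq_transpose_mulVec_le {m q r : ℕ} {Q₁ : Matrix (Fin m) (Fin q) ℝ}
    {Q₂ : Matrix (Fin m) (Fin r) ℝ} (hQ : Q₁ * Q₁ᵀ + Q₂ * Q₂ᵀ = 1) (x : Fin m → ℝ) :
    vnormSq (Q₂ᵀ *ᵥ x) ≤ vnormSq x := by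
  have hproj : ∀ {r} (Q : Matrix (Fin m) (Fin r) ℝ),
      vnormSq (Qᵀ *ᵥ x) = (Q * Qᵀ) *ᵥ x ⬝ᵥ x := by
    intro r Q
    rw [vnormSq_eq_dotProduct, dotProduct_mulVec, vecMul_transpose, mulVec_mulVec]
  have hsplit : vnormSq (Q₁ᵀ *ᵥ x) + vnormSq (Q₂ᵀ *ᵥ x) = vnormSq x := by
    rw [hproj, hproj, ← add_dotProduct, ← add_mulVec, hQ, one_mulVec, vnormSq_eq_dotProduct]
  linarith [vnormSq_nonneg (Q₁ᵀ *ᵥ x)]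

lemma sq_sum_mul_le_of_abs_le {m : ℕ} {u : Fin m → ℝ} {κ : ℝ} (hu : ∀ i, |u i| ≤ κ)
    (x : Fin m → ℝ) : (∑ i, x i * u i) ^ 2 ≤ m * κ ^ 2 * vnormSq x := by
  calc (∑ i, x i * u i) ^ 2 ≤ vnormSq x * ∑ i, u i ^ 2 :=
        Finset.sum_mul_sq_le_sq_mul_sq Finset.univ x u
    _ ≤ vnormSq x * ∑ _i : Fin m, κ ^ 2 := mul_le_mul_of_nonneg_left
        (Finset.sum_le_sum fun i _ => sq_le_sq.2 ((hu i).trans (le_abs_self κ))) (vnormSq_nonneg x)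
    _ = m * κ ^ 2 * vnormSq x := by
        rw [Finset.sum_const, Finset.card_univ, Fintype.card_fin, nsmul_eq_mul]
        ring

theorem Summable.sq {ι : Type*} {f : ι → ℝ} (hf : Summable f) : Summable fun i => f i ^ 2 := by
  refine .of_nonneg_of_le (fun _ => sq_nonneg _) (fun i => ?_) (hf.abs.mul_left (∑' j, |f j|))
  rw [← sq_abs, pow_two]
  exact mul_le_mul_of_nonneg_right (hf.abs.le_tsum i fun j _ => abs_nonneg _) (abs_nonneg _)

namespace Matrix

lemma IsHermitian.vnormSq_eq_sum_sq_dotProduct_eigenvectorBasis {m : ℕ}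
    {A : Matrix (Fin m) (Fin m) ℝ} (hA : A.IsHermitian) (w : Fin m → ℝ) :
    vnormSq w = ∑ k, (w ⬝ᵥ hA.eigenvectorBasis k) ^ 2 := by
  have hparseval := hA.eigenvectorBasis.sum_sq_norm_inner_right (WithLp.toLp 2 w)
  rw [EuclideanSpace.real_norm_sq_eq] at hparseval
  simp only [EuclideanSpace.inner_eq_star_dotProduct, Real.norm_eq_abs, sq_abs] at hparseval
  simpa [vnormSq, star_trivial, dotProduct_comm] using hparseval.symm

lemma IsHermitian.add_smul_one_mulVec_dotProduct_eigenvectorBasis {m : ℕ}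
    {A : Matrix (Fin m) (Fin m) ℝ} (hA : A.IsHermitian) (t : ℝ) (v : Fin m → ℝ) (k : Fin m) :
    ((A + t • 1) *ᵥ v) ⬝ᵥ hA.eigenvectorBasis k =
      (hA.eigenvalues k + t) * (v ⬝ᵥ hA.eigenvectorBasis k) := by
  have hAT : Aᵀ = A := by simpa [conjTranspose_eq_transpose_of_trivial] using hA.eq
  rw [dotProduct_comm, dotProduct_mulVec, ← mulVec_transpose, transpose_add, hAT]
  simp [add_mulVec, smul_mulVec, hA.mulVec_eigenvectorBasis, add_mul, dotProduct_comm]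

lemma PosDef.vnormSq_le_sum_inv_sq_eigenvalues_mul {m : ℕ} {A : Matrix (Fin m) (Fin m) ℝ}
    (hA : A.PosDef) {t : ℝ} (ht : 0 ≤ t) (v : Fin m → ℝ) :
    vnormSq v ≤ (∑ k, ((hA.1.eigenvalues k) ^ 2)⁻¹) * vnormSq ((A + t • 1) *ᵥ v) := by
  rw [hA.1.vnormSq_eq_sum_sq_dotProduct_eigenvectorBasis v, Finset.sum_mul]
  gcongr with k
  have hpos := hA.eigenvalues_pos k
  have hcoord : ((hA.1.eigenvalues k + t) * (v ⬝ᵥ hA.1.eigenvectorBasis k)) ^ 2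
      ≤ vnormSq ((A + t • 1) *ᵥ v) := by
    rw [hA.1.vnormSq_eq_sum_sq_dotProduct_eigenvectorBasis,
      ← hA.1.add_smul_one_mulVec_dotProduct_eigenvectorBasis t v k]
    exact Finset.single_le_sum (f := fun j => (((A + t • 1) *ᵥ v) ⬝ᵥ hA.1.eigenvectorBasis j) ^ 2)
      (fun j _ => sq_nonneg _) (Finset.mem_univ k)
  rw [← div_eq_inv_mul, le_div_iff₀ (by positivity)]
  calc (v ⬝ᵥ hA.1.eigenvectorBasis k) ^ 2 * hA.1.eigenvalues k ^ 2
      ≤ ((hA.1.eigenvalues k + t) * (v ⬝ᵥ hA.1.eigenvectorBasis k)) ^ 2 := by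
        rw [mul_pow, mul_comm]
        gcongr
        linarith
    _ ≤ _ := hcoord

end Matrix

section PenalizedSystem

variable {n p q : ℕ} {T Q₁ : Matrix (Fin n) (Fin p) ℝ} {Q₂ : Matrix (Fin n) (Fin q) ℝ}

lemma mulVec_transpose_mulVec_eq_of_transpose_mulVec_eq_zero {R : Matrix (Fin p) (Fin p) ℝ}
    (hQ : Q₁ * Q₁ᵀ + Q₂ * Q₂ᵀ = 1) (hR : IsUnit R) (hT : T = Q₁ * R) {c : Fin n → ℝ}
    (hc : Tᵀ *ᵥ c = 0) : Q₂ *ᵥ (Q₂ᵀ *ᵥ c) = c := by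
  have hQ₁c : Q₁ᵀ *ᵥ c = 0 := by
    apply mulVec_injective_iff_isUnit.2 ((isUnit_transpose R).2 hR)
    rw [mulVec_mulVec, ← transpose_mul, ← hT, hc, mulVec_zero]
  calc Q₂ *ᵥ (Q₂ᵀ *ᵥ c) = (Q₁ * Q₁ᵀ + Q₂ * Q₂ᵀ) *ᵥ c := by
        rw [add_mulVec, ← mulVec_mulVec, hQ₁c, mulVec_zero, zero_add, mulVec_mulVec]
    _ = c := by rw [hQ, one_mulVec]

lemma reduced_system_of_penalized_system {S : Matrix (Fin n) (Fin n) ℝ} {t : ℝ}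
    {y c : Fin n → ℝ} {d : Fin p → ℝ} (hQ₂T : Q₂ᵀ * T = 0) (hc : Q₂ *ᵥ (Q₂ᵀ *ᵥ c) = c)
    (h : T *ᵥ d + (S + t • 1) *ᵥ c = y) :
    (Q₂ᵀ * S * Q₂ + t • 1) *ᵥ (Q₂ᵀ *ᵥ c) = Q₂ᵀ *ᵥ y := by
  calc (Q₂ᵀ * S * Q₂ + t • 1) *ᵥ (Q₂ᵀ *ᵥ c)
        = Q₂ᵀ *ᵥ (S *ᵥ (Q₂ *ᵥ (Q₂ᵀ *ᵥ c))) + t • Q₂ᵀ *ᵥ c := by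
        rw [add_mulVec, smul_mulVec, one_mulVec, ← mulVec_mulVec, ← mulVec_mulVec]
    _ = Q₂ᵀ *ᵥ (T *ᵥ d) + Q₂ᵀ *ᵥ ((S + t • 1) *ᵥ c) := by
        rw [hc, mulVec_mulVec d Q₂ᵀ T, hQ₂T, zero_mulVec, zero_add, add_mulVec, mulVec_add,
          smul_mulVec, one_mulVec, mulVec_smul]
    _ = Q₂ᵀ *ᵥ y := by rw [← mulVec_add, h]

lemma vnormSq_sub_le_of_penalized_systems {R : Matrix (Fin p) (Fin p) ℝ}
    (hQ₂ : Q₂ᵀ * Q₂ = 1) (hQ₁₂ : Q₁ᵀ * Q₂ = 0) (hQ : Q₁ * Q₁ᵀ + Q₂ * Q₂ᵀ = 1) (hR : IsUnit R)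
    (hT : T = Q₁ * R) {S St : Matrix (Fin n) (Fin n) ℝ} (hpd : (Q₂ᵀ * S * Q₂).PosDef)
    (hpdt : (Q₂ᵀ * St * Q₂).PosDef) {t : ℝ} (ht : 0 ≤ t) {y c ct : Fin n → ℝ} {d dt : Fin p → ℝ}
    (hcd : T *ᵥ d + (S + t • 1) *ᵥ c = y) (hc0 : Tᵀ *ᵥ c = 0)
    (hcdt : T *ᵥ dt + (St + t • 1) *ᵥ ct = y) (hct0 : Tᵀ *ᵥ ct = 0) :
    vnormSq (ct - c) ≤ (∑ k, ((hpdt.1.eigenvalues k) ^ 2)⁻¹) *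
      (frobSq (St - S) * ((∑ k, ((hpd.1.eigenvalues k) ^ 2)⁻¹) * vnormSq (Q₂ᵀ *ᵥ y))) := by
  have hQ₂T : Q₂ᵀ * T = 0 := by
    rw [hT, ← Matrix.mul_assoc, ← transpose_transpose (Q₂ᵀ * Q₁), transpose_mul,
      transpose_transpose, hQ₁₂, transpose_zero, Matrix.zero_mul]
  have hc := mulVec_transpose_mulVec_eq_of_transpose_mulVec_eq_zero hQ hR hT hc0
  have hct := mulVec_transpose_mulVec_eq_of_transpose_mulVec_eq_zero hQ hR hT hct0
  have hz := reduced_system_of_penalized_system hQ₂T hc hcd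
  have hzt := reduced_system_of_penalized_system hQ₂T hct hcdt
  have hdiff :
      (Q₂ᵀ * St * Q₂ + t • 1) *ᵥ (Q₂ᵀ *ᵥ ct - Q₂ᵀ *ᵥ c) = Q₂ᵀ *ᵥ ((S - St) *ᵥ c) := by
    rw [mulVec_sub, hzt, ← hz, ← sub_mulVec, add_sub_add_right_eq_sub, ← Matrix.sub_mul,
      ← Matrix.mul_sub, ← mulVec_mulVec, ← mulVec_mulVec, hc]
  calc vnormSq (ct - c) = vnormSq (Q₂ᵀ *ᵥ ct - Q₂ᵀ *ᵥ c) := by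
        rw [← vnormSq_mulVec_of_transpose_mul_self hQ₂, mulVec_sub, hc, hct]
    _ ≤ (∑ k, ((hpdt.1.eigenvalues k) ^ 2)⁻¹) * vnormSq (Q₂ᵀ *ᵥ ((S - St) *ᵥ c)) := by
        simpa only [hdiff] using
          hpdt.vnormSq_le_sum_inv_sq_eigenvalues_mul ht (Q₂ᵀ *ᵥ ct - Q₂ᵀ *ᵥ c)
    _ ≤ (∑ k, ((hpdt.1.eigenvalues k) ^ 2)⁻¹) * (frobSq (St - S) * vnormSq (Q₂ᵀ *ᵥ c)) := by
        gcongr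
        calc vnormSq (Q₂ᵀ *ᵥ ((S - St) *ᵥ c)) ≤ vnormSq ((S - St) *ᵥ c) :=
              vnormSq_transpose_mulVec_le hQ _
          _ ≤ frobSq (St - S) * vnormSq (Q₂ᵀ *ᵥ c) := by
              rw [frobSq_sub_comm, ← vnormSq_mulVec_of_transpose_mul_self hQ₂, hc]
              exact vnormSq_mulVec_le _ _
    _ ≤ _ := by
        gcongr
        · exact frobSq_nonneg _
        · simpa only [hz] using hpd.vnormSq_le_sum_inv_sq_eigenvalues_mul ht (Q₂ᵀ *ᵥ c)

end PenalizedSystem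

section OrthonormalExpansion

variable {ι H : Type*} [NormedAddCommGroup H] [InnerProductSpace ℝ H] [CompleteSpace H]
  {Φ : ι → H}

lemma Orthonormal.summable_smul (hΦ : Orthonormal ℝ Φ) {g : ι → ℝ}
    (hg : Summable fun k => g k ^ 2) : Summable fun k => g k • Φ k := by
  simpa using (hΦ.orthogonalFamily.summable_iff_norm_sq_summable g).2 (by simpa using hg)

lemma Orthonormal.norm_tsum_smul_sq (hΦ : Orthonormal ℝ Φ) {g : ι → ℝ}
    (hg : Summable fun k => g k ^ 2) : ‖∑' k, g k • Φ k‖ ^ 2 = ∑' k, g k ^ 2 := by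
  have hfin : ∀ s : Finset ι, ‖∑ k ∈ s, g k • Φ k‖ ^ 2 = ∑ k ∈ s, g k ^ 2 := by
    intro s
    rw [← real_inner_self_eq_norm_sq, hΦ.inner_sum g g s]
    simp [sq]
  have hlim := ((continuous_norm.tendsto _).comp (hΦ.summable_smul hg).hasSum).pow 2
  simp only [Function.comp_def, hfin] at hlim
  exact tendsto_nhds_unique hlim hg.hasSum

lemma Orthonormal.norm_sum_range_sub_tsum_sq {Φ : ℕ → H} (hΦ : Orthonormal ℝ Φ) {a b : ℕ → ℝ}
    (hb : Summable fun k => b k ^ 2) (K : ℕ) :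
    ‖∑ k ∈ Finset.range K, a k • Φ k - ∑' k, b k • Φ k‖ ^ 2 =
      ∑ k ∈ Finset.range K, (a k - b k) ^ 2 + ∑' k, b (k + K) ^ 2 := by
  set a' : ℕ → ℝ := fun k => if k < K then a k else 0
  have ha' : ∑ k ∈ Finset.range K, a k • Φ k = ∑' k, a' k • Φ k := by
    rw [tsum_eq_sum (s := Finset.range K) fun k hk => by simp_all [a']]
    exact Finset.sum_congr rfl fun k hk => by simp_all [a']
  have hhead : ∀ k ∈ Finset.range K, a' k - b k = a k - b k := fun k hk => by simp_all [a']
  have htail : ∀ k, a' (k + K) - b (k + K) = -b (k + K) := fun k => by simp [a']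
  have hg : Summable fun k => (a' k - b k) ^ 2 :=
    (summable_nat_add_iff K).1 (by simpa [htail] using (summable_nat_add_iff K).2 hb)
  have hvec : ∑ k ∈ Finset.range K, a k • Φ k - ∑' k, b k • Φ k = ∑' k, (a' k - b k) • Φ k := by
    have ha's : Summable fun k => a' k • Φ k :=
      summable_of_ne_finset_zero (s := Finset.range K) fun k hk => by simp_all [a']
    rw [ha', ← ha's.tsum_sub (hΦ.summable_smul hb)]
    simp only [sub_smul]
  rw [hvec, hΦ.norm_tsum_smul_sq hg, ← hg.sum_add_tsum_nat_add K, Finset.sum_congr rfl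
    fun k hk => by rw [hhead k hk]]
  simp only [htail, neg_sq]

end OrthonormalExpansion

theorem stmt10_general
    (n p : ℕ) (hpn : p < n)
    (y : Fin n → ℝ) (lam : ℝ) (hlam : 0 < lam)
    (T Q₁ : Matrix (Fin n) (Fin p) ℝ) (Q₂ : Matrix (Fin n) (Fin (n - p)) ℝ)
    (R : Matrix (Fin p) (Fin p) ℝ)
    (hQ₂ : Q₂ᵀ * Q₂ = 1) (hQ₁₂ : Q₁ᵀ * Q₂ = 0)
    (hQ : Q₁ * Q₁ᵀ + Q₂ * Q₂ᵀ = 1)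
    (hR : IsUnit R) (hT : T = Q₁ * R)
    (K : ℕ) (κ : ℝ)
    (δ : ℕ → ℝ) (hδsum : Summable δ)
    (U : Fin n → ℕ → ℝ) (hU : ∀ i k, |U i k| ≤ κ)
    (S St : Matrix (Fin n) (Fin n) ℝ)
    (hpd : (Q₂ᵀ * S * Q₂).PosDef) (hpdt : (Q₂ᵀ * St * Q₂).PosDef)
    (c : Fin n → ℝ) (d : Fin p → ℝ)
    (hcd : T *ᵥ d + (S + ((n : ℝ) * lam) • 1) *ᵥ c = y) (hc0 : Tᵀ *ᵥ c = 0)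
    (ct : Fin n → ℝ) (dt : Fin p → ℝ)
    (hcdt : T *ᵥ dt + (St + ((n : ℝ) * lam) • 1) *ᵥ ct = y) (hct0 : Tᵀ *ᵥ ct = 0)
    {H : Type*} [NormedAddCommGroup H] [InnerProductSpace ℝ H] [CompleteSpace H]
    (Φ : ℕ → H) (hΦ : Orthonormal ℝ Φ) :
    ‖(∑ k ∈ Finset.range K, (δ k * ∑ i, ct i * U i k) • Φ k) -
        (∑' k, (δ k * ∑ i, c i * U i k) • Φ k)‖ ^ 2 ≤
      ((n : ℝ) * κ ^ 2 * (∑ k ∈ Finset.range K, δ k ^ 2) *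
          ((frobSq Q₂) ^ 3 * vnormSq (Q₂ᵀ *ᵥ y)) *
          (∑ k, ((hpd.1.eigenvalues k) ^ 2)⁻¹) *
          (∑ k, ((hpdt.1.eigenvalues k) ^ 2)⁻¹)) * frobSq (St - S) +
        (n : ℝ) * κ ^ 2 * vnormSq c * (∑' k, δ (k + K) ^ 2) := by
  have hcoef := vnormSq_sub_le_of_penalized_systems hQ₂ hQ₁₂ hQ hR hT hpd hpdt
    (by positivity) hcd hc0 hcdt hct0
  have hζ₁ : vnormSq (Q₂ᵀ *ᵥ y) ≤ frobSq Q₂ ^ 3 * vnormSq (Q₂ᵀ *ᵥ y) := by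
    refine le_mul_of_one_le_left (vnormSq_nonneg _) (one_le_pow₀ ?_)
    rw [frobSq_eq_of_transpose_mul_self hQ₂]
    exact_mod_cast Nat.sub_pos_of_lt hpn
  have hterm : ∀ (x : Fin n → ℝ) k,
      (δ k * ∑ i, x i * U i k) ^ 2 ≤ n * κ ^ 2 * vnormSq x * δ k ^ 2 := fun x k => by
    rw [mul_pow, mul_comm]
    exact mul_le_mul_of_nonneg_right (sq_sum_mul_le_of_abs_le (fun i => hU i k) x) (sq_nonneg _)
  have hδ2 := hδsum.sq
  have ha : Summable fun k => (δ k * ∑ i, c i * U i k) ^ 2 :=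
    .of_nonneg_of_le (fun _ => sq_nonneg _) (hterm c) (hδ2.mul_left _)
  rw [hΦ.norm_sum_range_sub_tsum_sq ha K]
  gcongr ?_ + ?_
  · calc ∑ k ∈ Finset.range K, (δ k * ∑ i, ct i * U i k - δ k * ∑ i, c i * U i k) ^ 2
        = ∑ k ∈ Finset.range K, (δ k * ∑ i, (ct - c) i * U i k) ^ 2 := by
          simp only [Pi.sub_apply, sub_mul, Finset.sum_sub_distrib, mul_sub]
      _ ≤ ∑ k ∈ Finset.range K, n * κ ^ 2 * vnormSq (ct - c) * δ k ^ 2 :=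
          Finset.sum_le_sum fun k _ => hterm _ k
      _ ≤ n * κ ^ 2 * ((∑ k, ((hpdt.1.eigenvalues k) ^ 2)⁻¹) * (frobSq (St - S) *
            ((∑ k, ((hpd.1.eigenvalues k) ^ 2)⁻¹) * (frobSq Q₂ ^ 3 * vnormSq (Q₂ᵀ *ᵥ y))))) *
            ∑ k ∈ Finset.range K, δ k ^ 2 := by
          rw [← Finset.mul_sum]
          gcongr
          refine hcoef.trans ?_
          gcongr
          exact frobSq_nonneg _
      _ = _ := by ring
  · calc ∑' k, (δ (k + K) * ∑ i, c i * U i (k + K)) ^ 2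
        ≤ ∑' k, n * κ ^ 2 * vnormSq c * δ (k + K) ^ 2 :=
          Summable.tsum_le_tsum (fun k => hterm c (k + K)) ((summable_nat_add_iff K).2 ha)
            (((summable_nat_add_iff K).2 hδ2).mul_left _)
      _ = _ := tsum_mul_left

/-- Theorem 1, second bound: in the smoothing spline truncation setting with
Hilbert-space expansions, `‖f̃₁ − f̂₁‖² ≤ ζ₃ ‖Σ̃ − Σ‖_F² + n κ² ‖c‖² D_K`, where
`ζ₃ = n κ² C_K ζ₁ B B̃`, `C_K = Σ_{k=1}^K δ_k²`, `D_K = Σ_{k=K+1}^∞ δ_k²`. -/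
theorem stmt10
    (n p : ℕ) (hp : 1 ≤ p) (hpn : p < n)
    (y : Fin n → ℝ) (lam : ℝ) (hlam : 0 < lam)
    (T Q₁ : Matrix (Fin n) (Fin p) ℝ) (Q₂ : Matrix (Fin n) (Fin (n - p)) ℝ)
    (R : Matrix (Fin p) (Fin p) ℝ)
    (hQ₁ : Q₁ᵀ * Q₁ = 1) (hQ₂ : Q₂ᵀ * Q₂ = 1) (hQ₁₂ : Q₁ᵀ * Q₂ = 0)
    (hQ : Q₁ * Q₁ᵀ + Q₂ * Q₂ᵀ = 1)
    (hR : IsUnit R) (hRtri : R.BlockTriangular id) (hT : T = Q₁ * R)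
    (K : ℕ) (hK : 1 ≤ K) (κ : ℝ) (hκ : 0 < κ)
    (δ : ℕ → ℝ) (hδ0 : ∀ k, 0 ≤ δ k) (hδmono : ∀ k, δ (k + 1) ≤ δ k) (hδsum : Summable δ)
    (U : Fin n → ℕ → ℝ) (hU : ∀ i k, |U i k| ≤ κ)
    (S St : Matrix (Fin n) (Fin n) ℝ)
    (hS : ∀ i j, S i j = ∑' k, δ k * U i k * U j k)
    (hSt : ∀ i j, St i j = ∑ k ∈ Finset.range K, δ k * U i k * U j k)
    (hSpsd : S.PosSemidef) (hStpsd : St.PosSemidef)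
    (hpd : (Q₂ᵀ * S * Q₂).PosDef) (hpdt : (Q₂ᵀ * St * Q₂).PosDef)
    (hA : (T * ((Tᵀ * T)⁻¹ * (Tᵀ * T)⁻¹) * Tᵀ).IsHermitian)
    (c : Fin n → ℝ) (d : Fin p → ℝ)
    (hcd : T *ᵥ d + (S + ((n : ℝ) * lam) • 1) *ᵥ c = y) (hc0 : Tᵀ *ᵥ c = 0)
    (ct : Fin n → ℝ) (dt : Fin p → ℝ)
    (hcdt : T *ᵥ dt + (St + ((n : ℝ) * lam) • 1) *ᵥ ct = y) (hct0 : Tᵀ *ᵥ ct = 0)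
    {H : Type*} [NormedAddCommGroup H] [InnerProductSpace ℝ H] [CompleteSpace H]
    (φ : Fin p → H) (Φ : ℕ → H) (hφ : Orthonormal ℝ φ) (hΦ : Orthonormal ℝ Φ) :
    ‖(∑ k ∈ Finset.range K, (δ k * ∑ i, ct i * U i k) • Φ k) -
        (∑' k, (δ k * ∑ i, c i * U i k) • Φ k)‖ ^ 2 ≤
      ((n : ℝ) * κ ^ 2 * (∑ k ∈ Finset.range K, δ k ^ 2) *
          ((frobSq Q₂) ^ 3 * vnormSq (Q₂ᵀ *ᵥ y)) *
          (∑ k, ((hpd.1.eigenvalues k) ^ 2)⁻¹) *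
          (∑ k, ((hpdt.1.eigenvalues k) ^ 2)⁻¹)) * frobSq (St - S) +
        (n : ℝ) * κ ^ 2 * vnormSq c * (∑' k, δ (k + K) ^ 2) :=
  stmt10_general n p hpn y lam hlam T Q₁ Q₂ R hQ₂ hQ₁₂ hQ hR hT K κ δ hδsum U hU S St hpd hpdt c d
    hcd hc0 ct dt hcdt hct0 Φ hΦ
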